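/- If X is a finite partial group (X_1 finite), then X has only finitely many im-partial subgroups, i.e., only finitely many nonempty symmetric subsets (subfunctors) Y ⊆ X. -/

import Mathlib

/-- A symmetric (simplicial) set: a functor `Υᵒᵖ → Set`, where `Υ` has objects
`[n] = {0,…,n}` (encoded as `Fin (n+1)`) and all functions as morphisms.
For `α : [m] → [n]` and `x ∈ X_n`, `act α x` is `x · α ∈ X_m`. -/
structure SymSet where
  obj : ℕ → Type
  act : ∀ {m n : ℕ}, (Fin (m + 1) → Fin (n + 1)) → obj n → obj m
  act_id : ∀ {n : ℕ} (x : obj n), act id x = x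
  act_comp : ∀ {m n k : ℕ} (α : Fin (m + 1) → Fin (n + 1)) (β : Fin (n + 1) → Fin (k + 1))
      (x : obj k), act α (act β x) = act (β ∘ α) x

namespace SymSet

/-- `x_{ij} ∈ X_1`, the action on `x ∈ X_n` of the map `[1] → [n]` with `0 ↦ i`, `1 ↦ j`. -/
def edge (X : SymSet) {n : ℕ} (i j : Fin (n + 1)) (x : X.obj n) : X.obj 1 :=
  X.act (fun t : Fin 2 => if t = 0 then i else j) x

/-- The domain of an edge, its image under `ι₀ : [0] → [1]`, `0 ↦ 0`. -/
def edgeDom (X : SymSet) (f : X.obj 1) : X.obj 0 :=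
  X.act (fun _ : Fin 1 => (0 : Fin 2)) f

/-- The codomain of an edge, its image under `ι₁ : [0] → [1]`, `0 ↦ 1`. -/
def edgeCod (X : SymSet) (f : X.obj 1) : X.obj 0 :=
  X.act (fun _ : Fin 1 => (1 : Fin 2)) f

/-- The identity edge `id_a` on an object `a ∈ X_0`, induced by the unique map `[1] → [0]`. -/
def identityEdge (X : SymSet) (a : X.obj 0) : X.obj 1 :=
  X.act (fun _ : Fin 2 => (0 : Fin 1)) a

/-- An edge is an identity if it is in the image of `X_0 → X_1`. -/
def IsIdentityEdge (X : SymSet) (f : X.obj 1) : Prop :=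
  ∃ a : X.obj 0, f = X.identityEdge a

/-- The tuple of edges `x_{ij}` (for `i < j` an edge `{i,j}` of the spine `T`)
associated to an `n`-simplex `x`. -/
def spineTuple (X : SymSet) {n : ℕ} (T : SimpleGraph (Fin (n + 1))) (x : X.obj n) :
    ∀ i j : Fin (n + 1), i < j → T.Adj i j → X.obj 1 :=
  fun i j _ _ => X.edge i j x

/-- Membership in `lim_T X`: the components have matching endpoints. -/
def IsSpineLim (X : SymSet) {n : ℕ} (T : SimpleGraph (Fin (n + 1)))
    (e : ∀ i j : Fin (n + 1), i < j → T.Adj i j → X.obj 1) : Prop :=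
  ∃ v : Fin (n + 1) → X.obj 0, ∀ (i j : Fin (n + 1)) (hlt : i < j) (h : T.Adj i j),
    X.edgeDom (e i j hlt h) = v i ∧ X.edgeCod (e i j hlt h) = v j

/-- The limit `lim_T X` of the diagram associated to a spine `T`. -/
def SpineLim (X : SymSet) {n : ℕ} (T : SimpleGraph (Fin (n + 1))) : Type :=
  { e : ∀ i j : Fin (n + 1), i < j → T.Adj i j → X.obj 1 // X.IsSpineLim T e }

lemma spineTuple_isSpineLim (X : SymSet) {n : ℕ} (T : SimpleGraph (Fin (n + 1)))
    (x : X.obj n) : X.IsSpineLim T (X.spineTuple T x) := by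
  refine ⟨fun i => X.act (fun _ : Fin 1 => i) x, fun i j hlt h => ⟨?_, ?_⟩⟩
  · show X.act _ (X.act _ x) = _
    rw [X.act_comp]
    show X.act ((fun t : Fin 2 => if t = 0 then i else j) ∘ fun _ : Fin 1 => 0) x
      = X.act (fun _ : Fin 1 => i) x
    congr 1
  · show X.act _ (X.act _ x) = _
    rw [X.act_comp]
    show X.act ((fun t : Fin 2 => if t = 0 then i else j) ∘ fun _ : Fin 1 => 1) x
      = X.act (fun _ : Fin 1 => j) x
    congr 1

/-- The map `𝓔_T : X_n → lim_T X`. -/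
def spineMap (X : SymSet) {n : ℕ} (T : SimpleGraph (Fin (n + 1))) (x : X.obj n) :
    X.SpineLim T :=
  ⟨X.spineTuple T x, X.spineTuple_isSpineLim T x⟩

/-- A symmetric set is *spiny* if `𝓔_T` is injective for every `n ≥ 1` and
every spine `T` of `[n]` (a tree with vertex set `[n]`). -/
def Spiny (X : SymSet) : Prop :=
  ∀ n : ℕ, 1 ≤ n → ∀ T : SimpleGraph (Fin (n + 1)), T.IsTree →
    Function.Injective (X.spineMap T)

/-- An element `x ∈ X_n` is degenerate if `x = y · σ` for some noninvertible
surjection `σ : [n] → [k]`. -/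
def Degenerate (X : SymSet) {n : ℕ} (x : X.obj n) : Prop :=
  ∃ (k : ℕ) (σ : Fin (n + 1) → Fin (k + 1)) (y : X.obj k),
    Function.Surjective σ ∧ ¬ Function.Bijective σ ∧ x = X.act σ y

/-- A symmetric subset (subfunctor) of `X`. -/
structure SymSubset (X : SymSet) where
  carrier : ∀ n : ℕ, Set (X.obj n)
  act_mem : ∀ {m n : ℕ} (α : Fin (m + 1) → Fin (n + 1)) {x : X.obj n},
    x ∈ carrier n → X.act α x ∈ carrier m

/-- `X` is `n`-skeletal: the smallest symmetric subset of `X` containing all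
of its `n`-simplices is all of `X`. -/
def IsSkeletal (X : SymSet) (n : ℕ) : Prop :=
  ∀ Y : SymSubset X, (∀ x : X.obj n, x ∈ Y.carrier n) →
    ∀ (m : ℕ) (x : X.obj m), x ∈ Y.carrier m

/-- `X` has dimension `n`: it is `n`-skeletal but not `k`-skeletal for `k < n`
(for `n ≥ 1` this is equivalent to not being `(n-1)`-skeletal). -/
def HasDim (X : SymSet) (n : ℕ) : Prop :=
  X.IsSkeletal n ∧ ∀ k : ℕ, k < n → ¬ X.IsSkeletal k

/-- Two objects are related if there is an edge between them (in either direction). -/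
def EdgeRel (X : SymSet) (a b : X.obj 0) : Prop :=
  ∃ f : X.obj 1, (X.edgeDom f = a ∧ X.edgeCod f = b) ∨ (X.edgeDom f = b ∧ X.edgeCod f = a)

/-- `X` is connected: it is nonempty and any two objects are joined by a
zig-zag of edges. -/
def Connected (X : SymSet) : Prop :=
  Nonempty (X.obj 0) ∧ ∀ a b : X.obj 0, Relation.ReflTransGen X.EdgeRel a b

/-- `n_a`: the number of nonidentity edges with domain `a`. -/
noncomputable def nEdges (X : SymSet) (a : X.obj 0) : ℕ :=
  Nat.card { f : X.obj 1 // X.edgeDom f = a ∧ ¬ X.IsIdentityEdge f }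

/-- `p(X)`: the maximum of the `n_a` over all objects `a`. -/
noncomputable def pVal (X : SymSet) : ℕ := ⨆ a : X.obj 0, X.nEdges a

/-- A map of symmetric sets (a natural transformation). -/
structure SymMap (X Y : SymSet) where
  app : ∀ n : ℕ, X.obj n → Y.obj n
  naturality : ∀ {m n : ℕ} (α : Fin (m + 1) → Fin (n + 1)) (x : X.obj n),
    app m (X.act α x) = Y.act α (app n x)

/-- A map of symmetric sets is an isomorphism iff it is levelwise bijective. -/
def SymMap.IsIso {X Y : SymSet} (F : SymMap X Y) : Prop :=
  ∀ n : ℕ, Function.Bijective (F.app n)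

/-- `X` and `Y` are isomorphic symmetric sets. -/
def Isomorphic (X Y : SymSet) : Prop := ∃ F : SymMap X Y, F.IsIso

/-- The Bousfield–Segal map `𝓑_m : X_m → X_1^m`, `x ↦ (x_{01}, x_{02}, …, x_{0m})`. -/
def bousfield (X : SymSet) {m : ℕ} (x : X.obj m) : Fin m → X.obj 1 :=
  fun i => X.edge 0 i.succ x

/-- `X` is spiny in degrees below `q`: `𝓔_T` is injective for every spine `T`
of `[n]` for each `1 ≤ n ≤ q`. -/
def SpinyBelow (X : SymSet) (q : ℕ) : Prop :=
  ∀ n : ℕ, 1 ≤ n → n ≤ q → ∀ T : SimpleGraph (Fin (n + 1)), T.IsTree →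
    Function.Injective (X.spineMap T)

/-- `X` is a groupoid: `𝓔_T : X_n → lim_T X` is a bijection for every `n ≥ 1`
and every spine `T` of `[n]`. -/
def IsGroupoid (X : SymSet) : Prop :=
  ∀ n : ℕ, 1 ≤ n → ∀ T : SimpleGraph (Fin (n + 1)), T.IsTree →
    Function.Bijective (X.spineMap T)

/-- `X` is reduced: `X_0` is a singleton. -/
def Reduced (X : SymSet) : Prop := Nonempty (X.obj 0) ∧ Subsingleton (X.obj 0)

/-- A partial group is a reduced spiny symmetric set. -/
def IsPartialGroup (X : SymSet) : Prop := X.Reduced ∧ X.Spiny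

/-- The levelwise product of two symmetric sets. -/
def prod (X Y : SymSet) : SymSet where
  obj n := X.obj n × Y.obj n
  act α p := (X.act α p.1, Y.act α p.2)
  act_id p := by cases p with | mk a b => simp only [X.act_id, Y.act_id]
  act_comp α β p := by cases p with | mk a b => simp only [X.act_comp, Y.act_comp]

end SymSet

/-! Along the star spine at `0`, spininess says that an `n`-simplex `x` is determined by its
edges `x_{0k}`. Once `n + 1 > |X_1|`, two of them coincide, `x_{0i} = x_{0j}` with `j ≠ 0`, so
`x` is fixed by the map collapsing `j` onto `i`. That map factors through the face `δ_j`, hence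
`x = (x · δ_j) · f` for some `f`, and `x` lies in every symmetric subset containing `x · δ_j`.
So a symmetric subset is determined by its levels `0, …, |X_1|`, each a subset of a finite set. -/

namespace SymSet

variable {X : SymSet}

theorem SymSubset.ext {Y Z : X.SymSubset} (h : ∀ n, Y.carrier n = Z.carrier n) : Y = Z := by
  cases Y
  cases Z
  congr
  exact funext h

theorem edge_act {m n : ℕ} (α : Fin (m + 1) → Fin (n + 1)) (i j : Fin (m + 1)) (x : X.obj n) :
    X.edge i j (X.act α x) = X.edge (α i) (α j) x := by
  simp only [edge, X.act_comp]
  congr 1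
  funext t
  exact apply_ite α _ i j

theorem finite_obj_zero [Finite (X.obj 1)] : Finite (X.obj 0) :=
  Finite.of_injective X.identityEdge fun a b h => by
    have hid : (fun _ : Fin 1 => (0 : Fin 1)) = id := Subsingleton.elim _ _
    simpa only [identityEdge, edgeDom, X.act_comp, Function.comp_def, hid, X.act_id] using
      congrArg X.edgeDom h

namespace Spiny

theorem ext_of_edge_zero (hX : X.Spiny) {n : ℕ} (hn : 1 ≤ n) {x y : X.obj n}
    (h : ∀ k, X.edge 0 k x = X.edge 0 k y) : x = y := by
  refine hX n hn _ (SimpleGraph.isTree_starGraph 0) (Subtype.ext ?_)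
  funext a b hab hadj
  obtain rfl : a = 0 := by
    rcases (SimpleGraph.starGraph_adj.mp hadj).2 with ha | rfl
    · exact ha
    · exact absurd hab (Fin.not_lt_zero a)
  exact h b

theorem finite_obj (hX : X.Spiny) [Finite (X.obj 1)] (n : ℕ) : Finite (X.obj n) := by
  cases n with
  | zero => exact finite_obj_zero
  | succ m =>
    have : Finite (X.SpineLim (SimpleGraph.starGraph (0 : Fin (m + 2)))) := Subtype.finite
    exact Finite.of_injective _ (hX (m + 1) m.succ_pos _ (SimpleGraph.isTree_starGraph 0))

theorem act_collapse_eq (hX : X.Spiny) {n : ℕ} (hn : 1 ≤ n) {x : X.obj n} {i j : Fin (n + 1)}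
    (hj : j ≠ 0) (h : X.edge 0 i x = X.edge 0 j x) :
    X.act (fun k => if k = j then i else k) x = x := by
  refine hX.ext_of_edge_zero hn fun k => ?_
  rw [edge_act, if_neg hj.symm]
  by_cases hk : k = j
  · rw [if_pos hk, h, hk]
  · rw [if_neg hk]

theorem exists_act_act_eq_of_card_lt (hX : X.Spiny) [Finite (X.obj 1)] {m : ℕ}
    (hm : Nat.card (X.obj 1) < m + 2) (x : X.obj (m + 1)) :
    ∃ (f : Fin (m + 2) → Fin (m + 1)) (g : Fin (m + 1) → Fin (m + 2)),
      X.act f (X.act g x) = x := by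
  obtain ⟨k, k', hne, heq⟩ : ∃ k k' : Fin (m + 2), k ≠ k' ∧ X.edge 0 k x = X.edge 0 k' x := by
    by_contra! hinj
    have := Nat.card_le_card_of_injective (fun k : Fin (m + 2) => X.edge 0 k x)
      fun k k' h => by_contra fun hne => hinj k k' hne h
    rw [Nat.card_fin] at this
    omega
  obtain ⟨i, j, hij, hj, h⟩ : ∃ i j : Fin (m + 2), i ≠ j ∧ j ≠ 0 ∧ X.edge 0 i x = X.edge 0 j x := by
    rcases eq_or_ne k' 0 with rfl | hk'
    · exact ⟨0, k, hne.symm, hne, heq.symm⟩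
    · exact ⟨k, k', hne, hk', heq⟩
  have hmiss : ∀ l, (if l = j then i else l) ≠ j := fun l => by split_ifs <;> assumption
  choose f hf using fun l => Fin.exists_succAbove_eq (hmiss l)
  refine ⟨f, j.succAbove, ?_⟩
  rw [X.act_comp, show j.succAbove ∘ f = _ from funext hf]
  exact hX.act_collapse_eq m.succ_pos hj h

theorem symSubset_ext_of_le_card (hX : X.Spiny) [Finite (X.obj 1)] {Y Z : X.SymSubset}
    (h : ∀ n ≤ Nat.card (X.obj 1), Y.carrier n = Z.carrier n) : Y = Z := by
  refine SymSubset.ext fun n => ?_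
  induction n using Nat.strong_induction_on with
  | _ n ih =>
    rcases le_or_gt n (Nat.card (X.obj 1)) with hn | hn
    · exact h n hn
    obtain ⟨m, rfl⟩ : ∃ m, n = m + 1 := ⟨n - 1, by omega⟩
    refine Set.ext fun x => ?_
    obtain ⟨f, g, hfg⟩ := hX.exists_act_act_eq_of_card_lt (by omega) x
    have transfer {A B : X.SymSubset} (hAB : A.carrier m = B.carrier m)
        (hx : x ∈ A.carrier (m + 1)) : x ∈ B.carrier (m + 1) :=
      hfg ▸ B.act_mem f (hAB ▸ A.act_mem g hx)
    exact ⟨transfer (ih m m.lt_succ_self), transfer (ih m m.lt_succ_self).symm⟩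

theorem finite_symSubset (hX : X.Spiny) [Finite (X.obj 1)] : Finite X.SymSubset := by
  have := hX.finite_obj
  exact Finite.of_injective (fun (Y : X.SymSubset) (k : Fin (Nat.card (X.obj 1) + 1)) =>
    Y.carrier k) fun Y Z h => hX.symSubset_ext_of_le_card fun n hn =>
      congrFun h ⟨n, Nat.lt_succ_of_le hn⟩

end Spiny

end SymSet

/-- a finite partial group has only finitely many im-partial subgroups
(nonempty symmetric subsets). -/
theorem stmt15 (X : SymSet) (hX : X.IsPartialGroup) (hfin : Finite (X.obj 1)) :
    Finite { Y : SymSet.SymSubset X // ∃ n : ℕ, (Y.carrier n).Nonempty } :=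
  have := hX.2.finite_symSubset
  Subtype.finite
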